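/- arXiv:1102.2689 — 2 statements merged into one kernel-verified Lean document; each statement's English description precedes it below -/
import Mathlib

section
/- Let w ∈ S_n and suppose (i,j) ∈ inv(w). Then for all 1 ≤ x ≤ c_i(w) and 1 ≤ y ≤ c_j(w), the elements b_{i,x}(w) and b_{j,y}(w) are incomparable in the product order (neither is ≤ the other). -/
/-- The inversion set of `w`: pairs of positions `(i,j)` with `i < j` and `w i > w j`. -/
def Invs {n : ℕ} (w : Equiv.Perm (Fin n)) : Finset (Fin n × Fin n) :=
  Finset.univ.filter (fun p => p.1 < p.2 ∧ w p.2 < w p.1)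

/-- The length (number of inversions) of `w`. -/
def len {n : ℕ} (w : Equiv.Perm (Fin n)) : ℕ := (Invs w).card

/-- The `i`-th entry of the Lehmer code of `w`. -/
def lehmer {n : ℕ} (w : Equiv.Perm (Fin n)) (i : Fin n) : ℕ :=
  ((Invs w).filter (fun p => p.1 = i)).card

/-- The extended Lehmer code `m_{i,j}(w)`: the number of inversions `(i,k)` with `k < j`. -/
def mext {n : ℕ} (w : Equiv.Perm (Fin n)) (i : Fin n) (j : Fin (n + 1)) : ℕ :=
  ((Invs w).filter (fun p => p.1 = i ∧ (p.2 : ℕ) < (j : ℕ))).card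

/-- The left weak order: `v ≤_L w` iff `inv(v) ⊆ inv(w)`. -/
def leftWeak {n : ℕ} (v w : Equiv.Perm (Fin n)) : Prop := Invs v ⊆ Invs w

/-- The value of `w` extended to `Fin (n+1)` by fixing the last point
(the `1`-indexed convention `w(n+1) = n+1` becomes `wval w n = n` here). -/
def wval {n : ℕ} (w : Equiv.Perm (Fin n)) (j : Fin (n + 1)) : ℕ :=
  if h : (j : ℕ) < n then (w ⟨j, h⟩ : ℕ) else n

/-- The set of non-inversions of `w`: pairs `(i,j)` with `i ≤ j ≤ n+1` and `w i ≤ w j`,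
where `w` is extended by fixing the last point. -/
def Ninvs {n : ℕ} (w : Equiv.Perm (Fin n)) : Finset (Fin n × Fin (n + 1)) :=
  Finset.univ.filter (fun p => (p.1 : ℕ) ≤ (p.2 : ℕ) ∧ (w p.1 : ℕ) ≤ wval w p.2)

/-- The set of Lehmer codes of elements of the weak order interval `Λ_w = [id, w]`. -/
def codeSet {n : ℕ} (w : Equiv.Perm (Fin n)) : Set (Fin n → ℕ) :=
  {x | ∃ v : Equiv.Perm (Fin n), leftWeak v w ∧ lehmer v = x}

/-- The tuple `b_{i,x}(w)`: the `j`-th coordinate is `0` if `j < i` or `(i,j) ∈ inv(w)`,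
and is `max {0, x - m_{i,j}(w)}` (truncated subtraction) if `j ≥ i` and `(i,j) ∈ ninv(w)`. -/
def bmin {n : ℕ} (w : Equiv.Perm (Fin n)) (i : Fin n) (x : ℕ) : Fin n → ℕ :=
  fun j => if (i : ℕ) ≤ (j : ℕ) ∧ (w i : ℕ) ≤ (w j : ℕ) then x - mext w i j.castSucc else 0

/-- The set `M_w` of all `b_{i,x}(w)` for `1 ≤ x ≤ c_i(w)`. -/
def Mset {n : ℕ} (w : Equiv.Perm (Fin n)) : Set (Fin n → ℕ) :=
  {z | ∃ (i : Fin n) (x : ℕ), 1 ≤ x ∧ x ≤ lehmer w i ∧ z = bmin w i x}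

/-- The direct sum `v × w ∈ S_{m+n}` of permutations. -/
def dsum {m n : ℕ} (v : Equiv.Perm (Fin m)) (w : Equiv.Perm (Fin n)) :
    Equiv.Perm (Fin (m + n)) :=
  finSumFinEquiv.permCongr (Equiv.sumCongr v w)

/-!
For an inversion `(i, j)` of `w`, coordinate `i` separates the two tuples: `b_{i,x}` has entry
`x ≥ 1` there while `b_{j,y}` vanishes left of `j`. Coordinate `j` separates them the other way:
`b_{j,y}` has entry `y ≥ 1` there while `b_{i,x}` vanishes at the inversion `(i, j)`.
-/

section bmin

variable {n : ℕ} (w : Equiv.Perm (Fin n))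

theorem mem_Invs_iff {i j : Fin n} : (i, j) ∈ Invs w ↔ i < j ∧ w j < w i := by
  simp [Invs]

theorem mext_castSucc_self (i : Fin n) : mext w i i.castSucc = 0 := by
  rw [mext, Finset.card_eq_zero, Finset.filter_eq_empty_iff]
  rintro ⟨k, l⟩ hkl ⟨rfl, hlk⟩
  exact Fin.lt_asymm ((mem_Invs_iff w).mp hkl).1 hlk

@[simp]
theorem bmin_apply_self (i : Fin n) (x : ℕ) : bmin w i x i = x := by
  simp [bmin, mext_castSucc_self]

theorem bmin_apply_of_lt {i j : Fin n} (hji : j < i) (x : ℕ) : bmin w i x j = 0 :=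
  if_neg fun h => Fin.not_le.mpr hji (Fin.le_iff_val_le_val.mpr h.1)

theorem bmin_apply_of_perm_lt {i j : Fin n} (hw : w j < w i) (x : ℕ) : bmin w i x j = 0 :=
  if_neg fun h => Fin.not_le.mpr hw (Fin.le_iff_val_le_val.mpr h.2)

end bmin

theorem bmin_incomparable_general {n : ℕ} (w : Equiv.Perm (Fin n)) (i j : Fin n)
    (hinv : (i, j) ∈ Invs w) (x y : ℕ)
    (hx1 : 1 ≤ x) (hy1 : 1 ≤ y) :
    ¬ bmin w i x ≤ bmin w j y ∧ ¬ bmin w j y ≤ bmin w i x := by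
  obtain ⟨hij, hw⟩ := (mem_Invs_iff w).mp hinv
  constructor
  · intro h
    have hi : bmin w i x i ≤ bmin w j y i := h i
    rw [bmin_apply_self, bmin_apply_of_lt w hij] at hi
    omega
  · intro h
    have hj : bmin w j y j ≤ bmin w i x j := h j
    rw [bmin_apply_self, bmin_apply_of_perm_lt w hw] at hj
    omega

/-- Lemma 4.11: if `(i,j) ∈ inv(w)`, then for all `1 ≤ x ≤ c_i(w)` and `1 ≤ y ≤ c_j(w)`
the elements `b_{i,x}(w)` and `b_{j,y}(w)` are incomparable in the product order. -/
theorem bmin_incomparable {n : ℕ} (w : Equiv.Perm (Fin n)) (i j : Fin n)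
    (hinv : (i, j) ∈ Invs w) (x y : ℕ)
    (hx1 : 1 ≤ x) (hx2 : x ≤ lehmer w i) (hy1 : 1 ≤ y) (hy2 : y ≤ lehmer w j) :
    ¬ bmin w i x ≤ bmin w j y ∧ ¬ bmin w j y ≤ bmin w i x :=
  bmin_incomparable_general w i j hinv x y hx1 hy1
end

section
/- Let w ∈ S_n and consider w × w⁻¹ ∈ S_{2n}. Then the weak order interval Λ_{w × w⁻¹} is rank-symmetric: for every k, |{u ∈ S_{2n} : u ≤_L w × w⁻¹, ℓ(u) = k}| = |{u ∈ S_{2n} : u ≤_L w × w⁻¹, ℓ(u) = ℓ(w × w⁻¹) − k}| (note ℓ(w × w⁻¹) = 2ℓ(w)). -/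
/-! A permutation `u ≤_L w × w⁻¹` cannot invert a pair straddling the two blocks, so it is itself
a direct sum `a × b` with `a ≤_L w` and `b ≤_L w⁻¹`. For `a ≤_L v`, the inversions of `a v⁻¹` are
the mirrored inversions of `v` not shared by `a`, so `a ↦ a v⁻¹` maps `Λ_v` into `Λ_{v⁻¹}` with
`ℓ(a v⁻¹) = ℓ(v) - ℓ(a)`. Hence `a × b ↦ (b w) × (a w⁻¹)`, i.e. conjugation by the block swap
followed by right multiplication with `w × w⁻¹`, is an involution of `Λ_{w × w⁻¹}` exchanging the
lengths `k` and `2ℓ(w) - k`. -/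

open Equiv Finset

section Inversions

variable {n : ℕ}

@[simp]
lemma mem_Invs {w : Perm (Fin n)} {p : Fin n × Fin n} :
    p ∈ Invs w ↔ p.1 < p.2 ∧ w p.2 < w p.1 := by
  simp [Invs]

lemma Invs_one : Invs (1 : Perm (Fin n)) = ∅ := by
  ext ⟨i, j⟩
  simp only [mem_Invs, Perm.one_apply, notMem_empty, iff_false, not_and]
  exact lt_asymm

lemma leftWeak_one (v : Perm (Fin n)) : leftWeak 1 v := by
  simp [leftWeak, Invs_one]

lemma Invs_mul_inv_of_leftWeak {a v : Perm (Fin n)} (h : leftWeak a v) :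
    Invs (a * v⁻¹) = (Invs v \ Invs a).image (fun p => (v p.2, v p.1)) := by
  ext ⟨x, y⟩
  simp only [mem_Invs, mem_image, mem_sdiff, Perm.mul_apply, Prod.mk.injEq, Prod.exists]
  constructor
  · rintro ⟨hxy, hval⟩
    refine ⟨v⁻¹ y, v⁻¹ x, ⟨⟨?_, by simpa using hxy⟩, ?_⟩, by simp, by simp⟩
    · rcases lt_trichotomy (v⁻¹ y) (v⁻¹ x) with hlt | heq | hgt
      · exact hlt
      · simp [hxy.ne'] at heq
      · have := (mem_Invs.mp (h (x := (v⁻¹ x, v⁻¹ y)) (mem_Invs.mpr ⟨hgt, hval⟩))).2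
        simp only [Perm.inv_def, apply_symm_apply] at this
        exact absurd hxy (lt_asymm this)
    · exact fun hinv => lt_asymm hval hinv.2
  · rintro ⟨p, q, ⟨hv, hna⟩, rfl, rfl⟩
    refine ⟨hv.2, ?_⟩
    simp only [Perm.inv_def, symm_apply_apply]
    rcases lt_trichotomy (a q) (a p) with hlt | heq | hgt
    · exact absurd ⟨hv.1, hlt⟩ hna
    · exact absurd (a.injective heq) hv.1.ne'
    · exact hgt

lemma len_mul_inv_add_len {a v : Perm (Fin n)} (h : leftWeak a v) :
    len (a * v⁻¹) + len a = len v := by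
  have hinj : Function.Injective (fun p : Fin n × Fin n => (v p.2, v p.1)) :=
    fun p q hpq => Prod.ext (v.injective (Prod.mk.inj hpq).2) (v.injective (Prod.mk.inj hpq).1)
  rw [len, Invs_mul_inv_of_leftWeak h, card_image_of_injective _ hinj, card_sdiff_of_subset h,
    len, len, Nat.sub_add_cancel (card_le_card h)]

lemma leftWeak_mul_inv {a v : Perm (Fin n)} (h : leftWeak a v) : leftWeak (a * v⁻¹) v⁻¹ := by
  rw [leftWeak, Invs_mul_inv_of_leftWeak h]
  intro p hp
  obtain ⟨q, hq, rfl⟩ := mem_image.mp hp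
  have hq := (mem_Invs.mp (mem_sdiff.mp hq).1)
  simpa using And.intro hq.2 hq.1

lemma len_inv (v : Perm (Fin n)) : len v⁻¹ = len v := by
  simpa [len, Invs_one] using len_mul_inv_add_len (leftWeak_one v)

end Inversions

section DirectSum

variable {m n : ℕ}

@[simp]
lemma dsum_castAdd (a : Perm (Fin m)) (b : Perm (Fin n)) (i : Fin m) :
    dsum a b (Fin.castAdd n i) = Fin.castAdd n (a i) := by
  simp [dsum, permCongr_apply]

@[simp]
lemma dsum_natAdd (a : Perm (Fin m)) (b : Perm (Fin n)) (j : Fin n) :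
    dsum a b (Fin.natAdd m j) = Fin.natAdd m (b j) := by
  simp [dsum, permCongr_apply]

lemma dsum_mul (a v : Perm (Fin m)) (b w : Perm (Fin n)) :
    dsum a b * dsum v w = dsum (a * v) (b * w) := by
  simp only [dsum, ← permCongr_mul, Perm.sumCongr_mul]

lemma dsum_inv (a : Perm (Fin m)) (b : Perm (Fin n)) : (dsum a b)⁻¹ = dsum a⁻¹ b⁻¹ := by
  rfl

@[simp]
lemma castAdd_lt_castAdd_iff {i j : Fin m} : Fin.castAdd n i < Fin.castAdd n j ↔ i < j :=
  (Fin.strictMono_castAdd n).lt_iff_lt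

@[simp]
lemma castAdd_lt_natAdd (i : Fin m) (j : Fin n) : Fin.castAdd n i < Fin.natAdd m j := by
  simp only [Fin.lt_def, Fin.val_castAdd, Fin.val_natAdd]
  omega

@[simp]
lemma castAdd_ne_natAdd (i : Fin m) (j : Fin n) : Fin.castAdd n i ≠ Fin.natAdd m j :=
  (castAdd_lt_natAdd i j).ne

@[simp]
lemma natAdd_ne_castAdd (i : Fin m) (j : Fin n) : Fin.natAdd m j ≠ Fin.castAdd n i :=
  (castAdd_lt_natAdd i j).ne'

@[simp]
lemma not_natAdd_lt_castAdd (i : Fin m) (j : Fin n) : ¬Fin.natAdd m j < Fin.castAdd n i :=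
  (castAdd_lt_natAdd i j).asymm

lemma Invs_dsum (a : Perm (Fin m)) (b : Perm (Fin n)) :
    Invs (dsum a b) = (Invs a).map ((Fin.castAddEmb n).prodMap (Fin.castAddEmb n)) ∪
      (Invs b).map ((Fin.natAddEmb m).prodMap (Fin.natAddEmb m)) := by
  ext ⟨x, y⟩
  induction x using Fin.addCases <;> induction y using Fin.addCases <;> simp

lemma len_dsum (a : Perm (Fin m)) (b : Perm (Fin n)) : len (dsum a b) = len a + len b := by
  rw [len, Invs_dsum, card_union_of_disjoint, card_map, card_map, len, len]
  simp only [disjoint_left, mem_map]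
  rintro _ ⟨p, -, rfl⟩ ⟨q, -, h⟩
  simp [Prod.ext_iff] at h

lemma leftWeak_dsum_iff {a v : Perm (Fin m)} {b w : Perm (Fin n)} :
    leftWeak (dsum a b) (dsum v w) ↔ leftWeak a v ∧ leftWeak b w := by
  refine ⟨fun h => ⟨fun ⟨i, j⟩ hp => ?_, fun ⟨i, j⟩ hp => ?_⟩, fun ⟨ha, hb⟩ => ?_⟩
  · simpa using h (x := (Fin.castAdd n i, Fin.castAdd n j)) (by simpa using hp)
  · simpa using h (x := (Fin.natAdd m i, Fin.natAdd m j)) (by simpa using hp)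
  · rw [leftWeak, Invs_dsum, Invs_dsum]
    exact union_subset_union (map_subset_map.mpr ha) (map_subset_map.mpr hb)

lemma castAdd_lt_natAdd_of_leftWeak_dsum {u : Perm (Fin (m + n))} {v : Perm (Fin m)}
    {w : Perm (Fin n)} (h : leftWeak u (dsum v w)) (i : Fin m) (j : Fin n) :
    u (Fin.castAdd n i) < u (Fin.natAdd m j) := by
  have hu : (Fin.castAdd n i, Fin.natAdd m j) ∉ Invs u := fun hu => by simpa using h hu
  simp only [mem_Invs, castAdd_lt_natAdd, true_and, not_lt] at hu
  exact hu.lt_of_ne (u.injective.ne (castAdd_ne_natAdd i j))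

end DirectSum

section DirectSumDecomposition

variable {m n : ℕ} {u : Perm (Fin (m + n))}

lemma val_castAdd_lt_of_forall_castAdd_lt_natAdd
    (h : ∀ i j, u (Fin.castAdd n i) < u (Fin.natAdd m j)) (i : Fin m) :
    (u (Fin.castAdd n i) : ℕ) < m := by
  have hcard : #(univ : Finset (Fin n)) ≤ #(Ioi (u (Fin.castAdd n i))) :=
    card_le_card_of_injOn (fun j => u (Fin.natAdd m j)) (fun j _ => by simpa using h i j)
      (u.injective.comp (Fin.natAdd_injective n m)).injOn
  rw [card_univ, Fintype.card_fin, Fin.card_Ioi] at hcard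
  omega

lemma le_val_natAdd_of_forall_castAdd_lt_natAdd
    (h : ∀ i j, u (Fin.castAdd n i) < u (Fin.natAdd m j)) (j : Fin n) :
    m ≤ (u (Fin.natAdd m j) : ℕ) := by
  have hcard : #(univ : Finset (Fin m)) ≤ #(Iio (u (Fin.natAdd m j))) :=
    card_le_card_of_injOn (fun i => u (Fin.castAdd n i)) (fun i _ => by simpa using h i j)
      (u.injective.comp (Fin.castAdd_injective m n)).injOn
  rwa [card_univ, Fintype.card_fin, Fin.card_Iio] at hcard

lemma exists_dsum_eq_of_forall_castAdd_lt_natAdd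
    (h : ∀ i j, u (Fin.castAdd n i) < u (Fin.natAdd m j)) :
    ∃ (a : Perm (Fin m)) (b : Perm (Fin n)), dsum a b = u := by
  have hlt := val_castAdd_lt_of_forall_castAdd_lt_natAdd h
  have hge := le_val_natAdd_of_forall_castAdd_lt_natAdd h
  let f : Fin m → Fin m := fun i => ⟨u (Fin.castAdd n i), hlt i⟩
  let g : Fin n → Fin n := fun j =>
    ⟨u (Fin.natAdd m j) - m, by have := hge j; have := (u (Fin.natAdd m j)).isLt; omega⟩
  have hf : f.Injective := fun i i' hii' =>
    Fin.castAdd_injective m n (u.injective (Fin.ext (Fin.mk.inj hii')))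
  have hg : g.Injective := fun j j' hjj' => by
    have hsub := Fin.mk.inj hjj'
    have hj := hge j
    have hj' := hge j'
    exact Fin.natAdd_injective n m (u.injective (Fin.ext (by omega)))
  refine ⟨.ofBijective f hf.bijective_of_finite, .ofBijective g hg.bijective_of_finite, ?_⟩
  ext x
  induction x using Fin.addCases with
  | left i => simp [f]
  | right j =>
    have hj := hge j
    simp only [dsum_natAdd, ofBijective_apply, Fin.natAdd_mk, g]
    omega

lemma exists_dsum_eq_of_leftWeak_dsum {v : Perm (Fin m)} {w : Perm (Fin n)}
    (h : leftWeak u (dsum v w)) : ∃ (a : Perm (Fin m)) (b : Perm (Fin n)), dsum a b = u :=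
  exists_dsum_eq_of_forall_castAdd_lt_natAdd (castAdd_lt_natAdd_of_leftWeak_dsum h)

end DirectSumDecomposition

section RankFlip

variable {n : ℕ}

def blockSwap (n : ℕ) : Perm (Fin (n + n)) :=
  finSumFinEquiv.permCongr (sumComm (Fin n) (Fin n))

lemma blockSwap_castAdd (i : Fin n) : blockSwap n (Fin.castAdd n i) = Fin.natAdd n i := by
  simp only [blockSwap, permCongr_apply, finSumFinEquiv_symm_apply_castAdd, sumComm_apply,
    Sum.swap_inl, finSumFinEquiv_apply_right]

lemma blockSwap_natAdd (i : Fin n) : blockSwap n (Fin.natAdd n i) = Fin.castAdd n i := by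
  simp only [blockSwap, permCongr_apply, finSumFinEquiv_symm_apply_natAdd, sumComm_apply,
    Sum.swap_inr, finSumFinEquiv_apply_left]

lemma blockSwap_mul_dsum_mul_blockSwap (a b : Perm (Fin n)) :
    blockSwap n * dsum a b * blockSwap n = dsum b a := by
  ext x
  induction x using Fin.addCases <;>
    simp only [Perm.mul_apply, blockSwap_castAdd, blockSwap_natAdd, dsum_castAdd, dsum_natAdd]

lemma blockSwap_mul_self : blockSwap n * blockSwap n = 1 := by
  ext x
  induction x using Fin.addCases <;>
    simp only [Perm.mul_apply, blockSwap_castAdd, blockSwap_natAdd, Perm.one_apply]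

def rankFlip (w : Perm (Fin n)) (u : Perm (Fin (n + n))) : Perm (Fin (n + n)) :=
  blockSwap n * u * blockSwap n * dsum w w⁻¹

lemma rankFlip_dsum (w a b : Perm (Fin n)) : rankFlip w (dsum a b) = dsum (b * w) (a * w⁻¹) := by
  rw [rankFlip, blockSwap_mul_dsum_mul_blockSwap, dsum_mul]

lemma rankFlip_involutive (w : Perm (Fin n)) : Function.Involutive (rankFlip w) := fun u =>
  calc blockSwap n * (blockSwap n * u * blockSwap n * dsum w w⁻¹) * blockSwap n * dsum w w⁻¹
      = blockSwap n * blockSwap n * u * (blockSwap n * dsum w w⁻¹ * blockSwap n) * dsum w w⁻¹ := by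
        simp only [mul_assoc]
    _ = u := by
      rw [blockSwap_mul_self, blockSwap_mul_dsum_mul_blockSwap, ← inv_inv w, ← dsum_inv, inv_inv,
        one_mul, inv_mul_cancel_right]

variable {w : Perm (Fin n)} {u : Perm (Fin (n + n))}

lemma leftWeak_rankFlip (hu : leftWeak u (dsum w w⁻¹)) : leftWeak (rankFlip w u) (dsum w w⁻¹) := by
  obtain ⟨a, b, rfl⟩ := exists_dsum_eq_of_leftWeak_dsum hu
  rw [leftWeak_dsum_iff] at hu
  rw [rankFlip_dsum, leftWeak_dsum_iff]
  exact ⟨by simpa using leftWeak_mul_inv hu.2, leftWeak_mul_inv hu.1⟩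

lemma len_rankFlip_add_len (hu : leftWeak u (dsum w w⁻¹)) :
    len (rankFlip w u) + len u = len (dsum w w⁻¹) := by
  obtain ⟨a, b, rfl⟩ := exists_dsum_eq_of_leftWeak_dsum hu
  rw [leftWeak_dsum_iff] at hu
  have ha := len_mul_inv_add_len hu.1
  have hb := len_mul_inv_add_len hu.2
  rw [inv_inv, len_inv] at hb
  rw [rankFlip_dsum, len_dsum, len_dsum, len_dsum, len_inv]
  omega

end RankFlip

/-- Proposition 5.2: the interval `Λ_{w × w⁻¹}` in the left weak order of `S_{2n}` is
rank-symmetric (note `ℓ(w × w⁻¹) = 2ℓ(w)`): for every `k`, the number of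
`u ≤_L w × w⁻¹` of length `k` equals the number of such `u` of length
`ℓ(w × w⁻¹) − k`. -/
theorem dsum_inv_rank_symmetric {n : ℕ} (w : Equiv.Perm (Fin n)) :
    len (dsum w w⁻¹) = 2 * len w ∧
    ∀ k : ℕ,
      {u : Equiv.Perm (Fin (n + n)) | leftWeak u (dsum w w⁻¹) ∧ len u = k}.ncard =
      {u : Equiv.Perm (Fin (n + n)) |
        leftWeak u (dsum w w⁻¹) ∧ len u + k = len (dsum w w⁻¹)}.ncard := by
  refine ⟨by rw [len_dsum, len_inv, two_mul], fun k => ?_⟩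
  have hflip := rankFlip_involutive w
  refine Set.ncard_congr (fun u _ => rankFlip w u) ?_ (fun _ _ _ _ h => hflip.injective h) ?_
  · rintro u ⟨hu, rfl⟩
    exact ⟨leftWeak_rankFlip hu, len_rankFlip_add_len hu⟩
  · rintro u ⟨hu, hk⟩
    refine ⟨rankFlip w u, ⟨leftWeak_rankFlip hu, ?_⟩, hflip u⟩
    have := len_rankFlip_add_len hu
    omega
end
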